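/- arXiv:2312.05536 — 3 statements merged into one kernel-verified Lean document; each statement's English description precedes it below -/
import Mathlib

section
/- Let ρ₀ be smooth on [0,1] with min ρ₀ > 0 and min ρ₀' > 0, g > 0, μ > 0, σ > 0, k > 0. Suppose λ ∈ ℂ and φ ∈ H²₀((0,1)) ∩ H⁴((0,1)), φ ≠ 0, satisfy λ²(k²ρ₀φ − (ρ₀φ')') + λμ(φ⁽⁴⁾ − 2k²φ'' + k⁴φ) = gk²ρ₀'φ + σk²((ρ₀')²φ')' − σk⁴(ρ₀')²φ with boundary conditions φ(0)=φ'(0)=φ(1)=φ'(1)=0, and Re λ > 0. Then λ is real. -/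
open MeasureTheory intervalIntegral Complex
open scoped ContDiff

lemma cvr_smooth_deriv {E : Type*} [NormedAddCommGroup E] [NormedSpace ℝ E]
    {f : ℝ → E} (hf : ContDiff ℝ ∞ f) : ContDiff ℝ ∞ (deriv f) :=
  (contDiff_infty_iff_deriv.mp hf).2

lemma cvr_conj_smooth {f : ℝ → ℂ} (hf : ContDiff ℝ ∞ f) :
    ContDiff ℝ ∞ (fun x => (starRingEnd ℂ) (f x)) := by
  have h := Complex.conjCLE.contDiff.comp (n := ∞) hf
  have he : (⇑Complex.conjCLE ∘ f) = fun x => (starRingEnd ℂ) (f x) :=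
    funext fun x => Complex.conjCLE_apply (f x)
  rwa [he] at h

lemma cvr_deriv_conj (f : ℝ → ℂ) :
    deriv (fun x => (starRingEnd ℂ) (f x)) = fun x => (starRingEnd ℂ) (deriv f x) := by
  simp only [starRingEnd_apply]
  exact deriv.star'

lemma cvr_L1 (h : ℝ → ℝ) (f : ℝ → ℂ) :
    ∫ x in (0:ℝ)..1, (h x : ℂ) * f x * (starRingEnd ℂ) (f x)
      = ((∫ x in (0:ℝ)..1, h x * Complex.normSq (f x)) : ℝ) := by
  rw [← intervalIntegral.integral_ofReal]
  congr 1
  funext x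
  rw [mul_assoc, Complex.mul_conj]
  push_cast
  ring

lemma cvr_L1' (f : ℝ → ℂ) :
    ∫ x in (0:ℝ)..1, f x * (starRingEnd ℂ) (f x)
      = ((∫ x in (0:ℝ)..1, Complex.normSq (f x)) : ℝ) := by
  rw [← intervalIntegral.integral_ofReal]
  congr 1
  funext x
  rw [Complex.mul_conj]

lemma cvr_ibp (f g : ℝ → ℂ) (hf : ContDiff ℝ ∞ f) (hg : ContDiff ℝ ∞ g) :
    ∫ x in (0:ℝ)..1, deriv f x * g x
      = f 1 * g 1 - f 0 * g 0 - ∫ x in (0:ℝ)..1, f x * deriv g x := by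
  have h1 : (1 : WithTop ℕ∞) ≤ ∞ := by exact_mod_cast le_top
  have hu : ∀ x ∈ Set.uIcc (0:ℝ) 1, HasDerivAt g (deriv g x) x :=
    fun x _ => ((hg.differentiable (by simp)) x).hasDerivAt
  have hv : ∀ x ∈ Set.uIcc (0:ℝ) 1, HasDerivAt f (deriv f x) x :=
    fun x _ => ((hf.differentiable (by simp)) x).hasDerivAt
  have hu' : IntervalIntegrable (deriv g) volume 0 1 :=
    (hg.continuous_deriv h1).intervalIntegrable _ _
  have hv' : IntervalIntegrable (deriv f) volume 0 1 :=
    (hf.continuous_deriv h1).intervalIntegrable _ _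
  have h := intervalIntegral.integral_mul_deriv_eq_deriv_mul hu hv hu' hv'
  calc ∫ x in (0:ℝ)..1, deriv f x * g x = ∫ x in (0:ℝ)..1, g x * deriv f x := by
        simp only [mul_comm]
    _ = g 1 * f 1 - g 0 * f 0 - ∫ x in (0:ℝ)..1, deriv g x * f x := h
    _ = f 1 * g 1 - f 0 * g 0 - ∫ x in (0:ℝ)..1, f x * deriv g x := by
        rw [mul_comm (g 1), mul_comm (g 0)]
        congr 1
        simp only [mul_comm]

/-- any characteristic value λ with positive real part is real. -/
theorem characteristic_value_real
    (ρ₀ : ℝ → ℝ) (g μ σ k : ℝ) (lam : ℂ) (φ : ℝ → ℂ)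
    (hρ : ContDiff ℝ (⊤ : ℕ∞) ρ₀)
    (hρpos : ∀ x ∈ Set.Icc (0:ℝ) 1, 0 < ρ₀ x)
    (hρ'pos : ∀ x ∈ Set.Icc (0:ℝ) 1, 0 < deriv ρ₀ x)
    (hg : 0 < g) (hμ : 0 < μ) (hσ : 0 < σ) (hk : 0 < k)
    (hφ : ContDiff ℝ (⊤ : ℕ∞) φ)
    (hφne : ∃ x ∈ Set.Icc (0:ℝ) 1, φ x ≠ 0)
    (hbc0 : φ 0 = 0) (hbc0' : deriv φ 0 = 0)
    (hbc1 : φ 1 = 0) (hbc1' : deriv φ 1 = 0)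
    (hRe : 0 < lam.re)
    (hODE : ∀ x ∈ Set.Icc (0:ℝ) 1,
      lam^2 * ((k:ℂ)^2 * Complex.ofReal (ρ₀ x) * φ x
          - deriv (fun y => Complex.ofReal (ρ₀ y) * deriv φ y) x)
        + lam * (μ:ℂ) * (iteratedDeriv 4 φ x - 2*(k:ℂ)^2 * iteratedDeriv 2 φ x + (k:ℂ)^4 * φ x)
      = (g:ℂ)*(k:ℂ)^2 * Complex.ofReal (deriv ρ₀ x) * φ x
        + (σ:ℂ)*(k:ℂ)^2 * deriv (fun y => (Complex.ofReal (deriv ρ₀ y))^2 * deriv φ y) x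
        - (σ:ℂ)*(k:ℂ)^4 * (Complex.ofReal (deriv ρ₀ x))^2 * φ x) :
    lam.im = 0 := by
  -- smoothness facts
  have hphi : ContDiff ℝ ∞ φ := hφ.of_le (by simp)
  have hrho : ContDiff ℝ ∞ ρ₀ := hρ.of_le (by simp)
  have hφ1 : ContDiff ℝ ∞ (deriv φ) := cvr_smooth_deriv hphi
  have hφ2 : ContDiff ℝ ∞ (deriv (deriv φ)) := cvr_smooth_deriv hφ1
  have hφ3 : ContDiff ℝ ∞ (deriv (deriv (deriv φ))) := cvr_smooth_deriv hφ2
  have hρ1 : ContDiff ℝ ∞ (deriv ρ₀) := cvr_smooth_deriv hrho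
  have hρc : ContDiff ℝ ∞ (fun y => Complex.ofReal (ρ₀ y)) :=
    Complex.ofRealCLM.contDiff.comp hrho
  have hρ'c : ContDiff ℝ ∞ (fun y => Complex.ofReal (deriv ρ₀ y)) :=
    Complex.ofRealCLM.contDiff.comp hρ1
  have hgc : ContDiff ℝ ∞ (fun x => (starRingEnd ℂ) (φ x)) := cvr_conj_smooth hphi
  have hit2 : iteratedDeriv 2 φ = deriv (deriv φ) := by
    rw [show (2:ℕ) = 1+1 from rfl, iteratedDeriv_succ, iteratedDeriv_one]
  have hit4 : iteratedDeriv 4 φ = deriv (deriv (deriv (deriv φ))) := by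
    rw [show (4:ℕ) = 3+1 from rfl, iteratedDeriv_succ,
        show (3:ℕ) = 2+1 from rfl, iteratedDeriv_succ,
        show (2:ℕ) = 1+1 from rfl, iteratedDeriv_succ, iteratedDeriv_one]
  -- the basic zero-order integrals
  have I1 := cvr_L1 ρ₀ φ
  have I5 := cvr_L1' φ
  have I6 := cvr_L1 (deriv ρ₀) φ
  have I8 : ∫ x in (0:ℝ)..1, (Complex.ofReal (deriv ρ₀ x))^2 * φ x * (starRingEnd ℂ) (φ x)
      = ((∫ x in (0:ℝ)..1, (deriv ρ₀ x)^2 * Complex.normSq (φ x)) : ℝ) := by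
    have h := cvr_L1 (fun x => (deriv ρ₀ x)^2) φ
    simpa only [Complex.ofReal_pow] using h
  -- integration by parts integrals
  have I2 : ∫ x in (0:ℝ)..1, deriv (fun y => Complex.ofReal (ρ₀ y) * deriv φ y) x
        * (starRingEnd ℂ) (φ x)
      = -((∫ x in (0:ℝ)..1, ρ₀ x * Complex.normSq (deriv φ x)) : ℝ) := by
    rw [cvr_ibp _ _ (hρc.mul hφ1) hgc]
    simp only [hbc0, hbc1, map_zero, mul_zero, zero_sub, zero_mul, sub_zero]
    rw [cvr_deriv_conj]
    rw [show (∫ x in (0:ℝ)..1, (fun y => Complex.ofReal (ρ₀ y) * deriv φ y) x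
        * (fun x => (starRingEnd ℂ) (deriv φ x)) x)
      = ∫ x in (0:ℝ)..1, (ρ₀ x : ℂ) * deriv φ x * (starRingEnd ℂ) (deriv φ x) from rfl]
    rw [cvr_L1 ρ₀ (deriv φ)]
  have I7 : ∫ x in (0:ℝ)..1, deriv (fun y => (Complex.ofReal (deriv ρ₀ y))^2 * deriv φ y) x
        * (starRingEnd ℂ) (φ x)
      = -((∫ x in (0:ℝ)..1, (deriv ρ₀ x)^2 * Complex.normSq (deriv φ x)) : ℝ) := by
    rw [cvr_ibp _ _ ((hρ'c.pow 2).mul hφ1) hgc]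
    simp only [hbc0, hbc1, map_zero, mul_zero, zero_sub, zero_mul, sub_zero]
    rw [cvr_deriv_conj]
    have h := cvr_L1 (fun x => (deriv ρ₀ x)^2) (deriv φ)
    simp only [Complex.ofReal_pow] at h
    rw [show (∫ x in (0:ℝ)..1, (fun y => (Complex.ofReal (deriv ρ₀ y))^2 * deriv φ y) x
        * (fun x => (starRingEnd ℂ) (deriv φ x)) x)
      = ∫ x in (0:ℝ)..1, (Complex.ofReal (deriv ρ₀ x))^2 * deriv φ x
        * (starRingEnd ℂ) (deriv φ x) from rfl]
    rw [h]
  have I4 : ∫ x in (0:ℝ)..1, iteratedDeriv 2 φ x * (starRingEnd ℂ) (φ x)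
      = -((∫ x in (0:ℝ)..1, Complex.normSq (deriv φ x)) : ℝ) := by
    rw [hit2, cvr_ibp _ _ hφ1 hgc]
    simp only [hbc0, hbc1, map_zero, mul_zero, zero_sub, zero_mul, sub_zero]
    rw [cvr_deriv_conj]
    rw [show (∫ x in (0:ℝ)..1, deriv φ x * (fun x => (starRingEnd ℂ) (deriv φ x)) x)
      = ∫ x in (0:ℝ)..1, deriv φ x * (starRingEnd ℂ) (deriv φ x) from rfl]
    rw [cvr_L1' (deriv φ)]
  have I3 : ∫ x in (0:ℝ)..1, iteratedDeriv 4 φ x * (starRingEnd ℂ) (φ x)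
      = ((∫ x in (0:ℝ)..1, Complex.normSq (deriv (deriv φ) x)) : ℝ) := by
    rw [hit4, cvr_ibp _ _ hφ3 hgc]
    simp only [hbc0, hbc1, map_zero, mul_zero, zero_sub, zero_mul, sub_zero]
    rw [cvr_deriv_conj]
    rw [show (∫ x in (0:ℝ)..1, deriv (deriv (deriv φ)) x
        * (fun x => (starRingEnd ℂ) (deriv φ x)) x)
      = ∫ x in (0:ℝ)..1, deriv (deriv (deriv φ)) x * (starRingEnd ℂ) (deriv φ x) from rfl]
    rw [cvr_ibp _ _ hφ2 (cvr_conj_smooth hφ1)]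
    simp only [hbc0', hbc1', map_zero, mul_zero, zero_sub, zero_mul, sub_zero, neg_neg]
    rw [cvr_deriv_conj]
    rw [show (∫ x in (0:ℝ)..1, deriv (deriv φ) x
        * (fun x => (starRingEnd ℂ) (deriv (deriv φ) x)) x)
      = ∫ x in (0:ℝ)..1, deriv (deriv φ) x * (starRingEnd ℂ) (deriv (deriv φ) x) from rfl]
    rw [cvr_L1' (deriv (deriv φ))]

  -- continuity facts
  have cφ : Continuous φ := hphi.continuous
  have cC : Continuous (fun x => (starRingEnd ℂ) (φ x)) := hgc.continuous
  have cρc : Continuous (fun x => Complex.ofReal (ρ₀ x)) := hρc.continuous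
  have cρ'c : Continuous (fun x => Complex.ofReal (deriv ρ₀ x)) := hρ'c.continuous
  have cit2 : Continuous (iteratedDeriv 2 φ) := by rw [hit2]; exact hφ2.continuous
  have cit4 : Continuous (iteratedDeriv 4 φ) := by
    rw [hit4]; exact (cvr_smooth_deriv hφ3).continuous
  have cD1 : Continuous (deriv (fun y => Complex.ofReal (ρ₀ y) * deriv φ y)) :=
    (cvr_smooth_deriv (hρc.mul hφ1)).continuous
  have cD2 : Continuous (deriv (fun y => (Complex.ofReal (deriv ρ₀ y))^2 * deriv φ y)) :=
    (cvr_smooth_deriv ((hρ'c.pow 2).mul hφ1)).continuous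
  -- the integrated identity
  have hEq : (∫ x in (0:ℝ)..1,
      (lam^2 * ((k:ℂ)^2 * Complex.ofReal (ρ₀ x) * φ x
          - deriv (fun y => Complex.ofReal (ρ₀ y) * deriv φ y) x)
        + lam * (μ:ℂ) * (iteratedDeriv 4 φ x - 2*(k:ℂ)^2 * iteratedDeriv 2 φ x + (k:ℂ)^4 * φ x))
        * (starRingEnd ℂ) (φ x))
      = ∫ x in (0:ℝ)..1,
      ((g:ℂ)*(k:ℂ)^2 * Complex.ofReal (deriv ρ₀ x) * φ x
        + (σ:ℂ)*(k:ℂ)^2 * deriv (fun y => (Complex.ofReal (deriv ρ₀ y))^2 * deriv φ y) x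
        - (σ:ℂ)*(k:ℂ)^4 * (Complex.ofReal (deriv ρ₀ x))^2 * φ x) * (starRingEnd ℂ) (φ x) := by
    apply intervalIntegral.integral_congr
    intro x hx
    rw [Set.uIcc_of_le (by norm_num : (0:ℝ) ≤ 1)] at hx
    dsimp only
    rw [hODE x hx]
  -- split the left-hand side
  have esplitL : (fun x =>
      (lam^2 * ((k:ℂ)^2 * Complex.ofReal (ρ₀ x) * φ x
          - deriv (fun y => Complex.ofReal (ρ₀ y) * deriv φ y) x)
        + lam * (μ:ℂ) * (iteratedDeriv 4 φ x - 2*(k:ℂ)^2 * iteratedDeriv 2 φ x + (k:ℂ)^4 * φ x))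
        * (starRingEnd ℂ) (φ x))
      = fun x =>
        lam^2*(k:ℂ)^2 * (Complex.ofReal (ρ₀ x) * φ x * (starRingEnd ℂ) (φ x))
        - lam^2 * (deriv (fun y => Complex.ofReal (ρ₀ y) * deriv φ y) x * (starRingEnd ℂ) (φ x))
        + lam*(μ:ℂ) * (iteratedDeriv 4 φ x * (starRingEnd ℂ) (φ x))
        - 2*lam*(μ:ℂ)*(k:ℂ)^2 * (iteratedDeriv 2 φ x * (starRingEnd ℂ) (φ x))
        + lam*(μ:ℂ)*(k:ℂ)^4 * (φ x * (starRingEnd ℂ) (φ x)) := by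
    funext x; ring
  have esplitR : (fun x =>
      ((g:ℂ)*(k:ℂ)^2 * Complex.ofReal (deriv ρ₀ x) * φ x
        + (σ:ℂ)*(k:ℂ)^2 * deriv (fun y => (Complex.ofReal (deriv ρ₀ y))^2 * deriv φ y) x
        - (σ:ℂ)*(k:ℂ)^4 * (Complex.ofReal (deriv ρ₀ x))^2 * φ x) * (starRingEnd ℂ) (φ x))
      = fun x =>
        (g:ℂ)*(k:ℂ)^2 * (Complex.ofReal (deriv ρ₀ x) * φ x * (starRingEnd ℂ) (φ x))
        + (σ:ℂ)*(k:ℂ)^2 * (deriv (fun y => (Complex.ofReal (deriv ρ₀ y))^2 * deriv φ y) x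
            * (starRingEnd ℂ) (φ x))
        - (σ:ℂ)*(k:ℂ)^4 * ((Complex.ofReal (deriv ρ₀ x))^2 * φ x * (starRingEnd ℂ) (φ x)) := by
    funext x; ring
  rw [esplitL, esplitR] at hEq
  have iL1 : IntervalIntegrable (fun x =>
      lam^2*(k:ℂ)^2 * (Complex.ofReal (ρ₀ x) * φ x * (starRingEnd ℂ) (φ x))) volume 0 1 :=
    (continuous_const.mul ((cρc.mul cφ).mul cC)).intervalIntegrable 0 1
  have iL2 : IntervalIntegrable (fun x =>
      lam^2 * (deriv (fun y => Complex.ofReal (ρ₀ y) * deriv φ y) x * (starRingEnd ℂ) (φ x)))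
      volume 0 1 :=
    (continuous_const.mul (cD1.mul cC)).intervalIntegrable 0 1
  have iL3 : IntervalIntegrable (fun x =>
      lam*(μ:ℂ) * (iteratedDeriv 4 φ x * (starRingEnd ℂ) (φ x))) volume 0 1 :=
    (continuous_const.mul (cit4.mul cC)).intervalIntegrable 0 1
  have iL4 : IntervalIntegrable (fun x =>
      2*lam*(μ:ℂ)*(k:ℂ)^2 * (iteratedDeriv 2 φ x * (starRingEnd ℂ) (φ x))) volume 0 1 :=
    (continuous_const.mul (cit2.mul cC)).intervalIntegrable 0 1
  have iL5 : IntervalIntegrable (fun x =>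
      lam*(μ:ℂ)*(k:ℂ)^4 * (φ x * (starRingEnd ℂ) (φ x))) volume 0 1 :=
    (continuous_const.mul (cφ.mul cC)).intervalIntegrable 0 1
  have iR1 : IntervalIntegrable (fun x =>
      (g:ℂ)*(k:ℂ)^2 * (Complex.ofReal (deriv ρ₀ x) * φ x * (starRingEnd ℂ) (φ x))) volume 0 1 :=
    (continuous_const.mul ((cρ'c.mul cφ).mul cC)).intervalIntegrable 0 1
  have iR2 : IntervalIntegrable (fun x =>
      (σ:ℂ)*(k:ℂ)^2 * (deriv (fun y => (Complex.ofReal (deriv ρ₀ y))^2 * deriv φ y) x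
        * (starRingEnd ℂ) (φ x))) volume 0 1 :=
    (continuous_const.mul (cD2.mul cC)).intervalIntegrable 0 1
  have iR3 : IntervalIntegrable (fun x =>
      (σ:ℂ)*(k:ℂ)^4 * ((Complex.ofReal (deriv ρ₀ x))^2 * φ x * (starRingEnd ℂ) (φ x)))
      volume 0 1 :=
    (continuous_const.mul (((cρ'c.pow 2).mul cφ).mul cC)).intervalIntegrable 0 1
  rw [intervalIntegral.integral_add (((iL1.sub iL2).add iL3).sub iL4) iL5,
      intervalIntegral.integral_sub ((iL1.sub iL2).add iL3) iL4,
      intervalIntegral.integral_add (iL1.sub iL2) iL3,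
      intervalIntegral.integral_sub iL1 iL2,
      intervalIntegral.integral_sub (iR1.add iR2) iR3,
      intervalIntegral.integral_add iR1 iR2] at hEq
  simp only [intervalIntegral.integral_const_mul] at hEq
  rw [I1, I2, I3, I4, I5, I6, I7, I8] at hEq
  -- positivity of the real integrals
  have hPnn : 0 ≤ ∫ x in (0:ℝ)..1, ρ₀ x * Complex.normSq (φ x) :=
    intervalIntegral.integral_nonneg zero_le_one
      (fun u hu => mul_nonneg (hρpos u hu).le (Complex.normSq_nonneg _))
  have hQnn : 0 ≤ ∫ x in (0:ℝ)..1, ρ₀ x * Complex.normSq (deriv φ x) :=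
    intervalIntegral.integral_nonneg zero_le_one
      (fun u hu => mul_nonneg (hρpos u hu).le (Complex.normSq_nonneg _))
  have hN1nn : 0 ≤ ∫ x in (0:ℝ)..1, Complex.normSq (deriv φ x) :=
    intervalIntegral.integral_nonneg zero_le_one (fun u _ => Complex.normSq_nonneg _)
  have hN2nn : 0 ≤ ∫ x in (0:ℝ)..1, Complex.normSq (deriv (deriv φ) x) :=
    intervalIntegral.integral_nonneg zero_le_one (fun u _ => Complex.normSq_nonneg _)
  have hN0pos : 0 < ∫ x in (0:ℝ)..1, Complex.normSq (φ x) := by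
    obtain ⟨x₀, hx₀, hne⟩ := hφne
    exact intervalIntegral.integral_pos zero_lt_one
      (Complex.continuous_normSq.comp cφ).continuousOn
      (fun x _ => Complex.normSq_nonneg _)
      ⟨x₀, hx₀, Complex.normSq_pos.mpr hne⟩
  set RP : ℝ := ∫ x in (0:ℝ)..1, ρ₀ x * Complex.normSq (φ x) with hRPdef
  set RQ : ℝ := ∫ x in (0:ℝ)..1, ρ₀ x * Complex.normSq (deriv φ x) with hRQdef
  set RN0 : ℝ := ∫ x in (0:ℝ)..1, Complex.normSq (φ x) with hRN0def
  set RN1 : ℝ := ∫ x in (0:ℝ)..1, Complex.normSq (deriv φ x) with hRN1def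
  set RN2 : ℝ := ∫ x in (0:ℝ)..1, Complex.normSq (deriv (deriv φ) x) with hRN2def
  set RD : ℝ := ∫ x in (0:ℝ)..1, deriv ρ₀ x * Complex.normSq (φ x) with hRDdef
  set RE1 : ℝ := ∫ x in (0:ℝ)..1, (deriv ρ₀ x)^2 * Complex.normSq (deriv φ x) with hRE1def
  set RE0 : ℝ := ∫ x in (0:ℝ)..1, (deriv ρ₀ x)^2 * Complex.normSq (φ x) with hRE0def
  have key2 : lam*lam * ((k^2 * RP + RQ : ℝ) : ℂ)
      + lam * ((μ*(RN2 + 2*k^2*RN1 + k^4*RN0) : ℝ) : ℂ)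
      = ((g*k^2*RD - σ*k^2*RE1 - σ*k^4*RE0 : ℝ) : ℂ) := by
    push_cast
    linear_combination hEq
  have him := congrArg Complex.im key2
  simp only [Complex.add_im, Complex.mul_im, Complex.mul_re, Complex.ofReal_re,
    Complex.ofReal_im, mul_zero, zero_mul, add_zero, sub_zero, zero_add] at him
  have hAnn : (0:ℝ) ≤ k^2 * RP + RQ :=
    add_nonneg (mul_nonneg (by positivity) hPnn) hQnn
  have hBpos : (0:ℝ) < μ*(RN2 + 2*k^2*RN1 + k^4*RN0) := by
    have h4 : (0:ℝ) < k^4 * RN0 := mul_pos (pow_pos hk 4) hN0pos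
    have h2 : (0:ℝ) ≤ 2*k^2 * RN1 := mul_nonneg (by positivity) hN1nn
    have : (0:ℝ) < RN2 + 2*k^2*RN1 + k^4*RN0 := by nlinarith
    exact mul_pos hμ this
  have hfac : lam.im * (2*lam.re*(k^2*RP+RQ) + μ*(RN2 + 2*k^2*RN1 + k^4*RN0)) = 0 := by
    linear_combination him
  rcases mul_eq_zero.mp hfac with h | h
  · exact h
  · exfalso
    have hpos : (0:ℝ) < 2*lam.re*(k^2*RP+RQ) + μ*(RN2 + 2*k^2*RN1 + k^4*RN0) := by
      have : (0:ℝ) ≤ 2*lam.re*(k^2*RP+RQ) := mul_nonneg (by linarith) hAnn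
      linarith
    exact hpos.ne' h
end

section
/- Let ρ₀ be smooth on [0,1] with min ρ₀ > 0 and min ρ₀' > 0, g, μ, σ, k > 0. Suppose λ > 0 and φ ∈ H²₀((0,1)) ∩ H⁴((0,1)), φ ≠ 0, satisfy the fourth-order ODE λ²(k²ρ₀φ − (ρ₀φ')') + λμ(φ⁽⁴⁾ − 2k²φ'' + k⁴φ) = gk²ρ₀'φ + σk²((ρ₀')²φ')' − σk⁴(ρ₀')²φ with φ(0)=φ'(0)=φ(1)=φ'(1)=0. Then λ ≤ √(g/L₀), where L₀⁻¹ := max over [0,1] of ρ₀'/ρ₀. -/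
open MeasureTheory intervalIntegral

/-- characteristic values are bounded by √(g/L₀),
where L₀⁻¹ = max over [0,1] of ρ₀'/ρ₀. -/
theorem characteristic_value_bound
    (ρ₀ : ℝ → ℝ) (g μ σ k lam : ℝ) (φ : ℝ → ℝ)
    (hρ : ContDiff ℝ (⊤ : ℕ∞) ρ₀)
    (hρpos : ∀ x ∈ Set.Icc (0:ℝ) 1, 0 < ρ₀ x)
    (hρ'pos : ∀ x ∈ Set.Icc (0:ℝ) 1, 0 < deriv ρ₀ x)
    (hg : 0 < g) (hμ : 0 < μ) (hσ : 0 < σ) (hk : 0 < k) (hlam : 0 < lam)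
    (hφ : ContDiff ℝ (⊤ : ℕ∞) φ)
    (hφne : ∃ x ∈ Set.Icc (0:ℝ) 1, φ x ≠ 0)
    (hbc0 : φ 0 = 0) (hbc0' : deriv φ 0 = 0)
    (hbc1 : φ 1 = 0) (hbc1' : deriv φ 1 = 0)
    (hODE : ∀ x ∈ Set.Icc (0:ℝ) 1,
      lam^2 * (k^2 * ρ₀ x * φ x - deriv (fun y => ρ₀ y * deriv φ y) x)
        + lam * μ * (iteratedDeriv 4 φ x - 2*k^2 * iteratedDeriv 2 φ x + k^4 * φ x)
      = g*k^2 * deriv ρ₀ x * φ x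
        + σ*k^2 * deriv (fun y => (deriv ρ₀ y)^2 * deriv φ y) x
        - σ*k^4 * (deriv ρ₀ x)^2 * φ x) :
    lam ≤ Real.sqrt (g * sSup ((fun x => deriv ρ₀ x / ρ₀ x) '' Set.Icc (0:ℝ) 1)) := by
  -- smoothness of everything in sight (downgrade analytic-top to ∞)
  have hρ' : ContDiff ℝ (⊤ : ℕ∞) ρ₀ := hρ.of_le (by simp)
  have hφ' : ContDiff ℝ (⊤ : ℕ∞) φ := hφ.of_le (by simp)
  have hρd : ContDiff ℝ (⊤ : ℕ∞) (deriv ρ₀) := (contDiff_infty_iff_deriv.mp hρ').2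
  have hid : ∀ n : ℕ, ContDiff ℝ (⊤ : ℕ∞) (iteratedDeriv n φ) := by
    intro n
    rw [iteratedDeriv_eq_iterate]
    exact hφ'.iterate_deriv n
  have hφd : ContDiff ℝ (⊤ : ℕ∞) (deriv φ) := (contDiff_infty_iff_deriv.mp hφ').2
  have hp1 : ContDiff ℝ (⊤ : ℕ∞) (fun y => ρ₀ y * deriv φ y) := hρ'.mul hφd
  have hp2 : ContDiff ℝ (⊤ : ℕ∞) (fun y => (deriv ρ₀ y)^2 * deriv φ y) :=
    (hρd.pow 2).mul hφd
  -- the sup S of ρ₀'/ρ₀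
  set S : ℝ := sSup ((fun x => deriv ρ₀ x / ρ₀ x) '' Set.Icc (0:ℝ) 1) with hSdef
  have hratio_cont : ContinuousOn (fun x => deriv ρ₀ x / ρ₀ x) (Set.Icc (0:ℝ) 1) :=
    (hρd.continuous.continuousOn).div hρ'.continuous.continuousOn
      (fun x hx => (hρpos x hx).ne')
  have himg : IsCompact ((fun x => deriv ρ₀ x / ρ₀ x) '' Set.Icc (0:ℝ) 1) :=
    isCompact_Icc.image_of_continuousOn hratio_cont
  have hne : ((fun x => deriv ρ₀ x / ρ₀ x) '' Set.Icc (0:ℝ) 1).Nonempty :=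
    ⟨_, Set.mem_image_of_mem _ (Set.mem_Icc.mpr ⟨le_refl (0:ℝ), by norm_num⟩)⟩
  have hSle : ∀ x ∈ Set.Icc (0:ℝ) 1, deriv ρ₀ x ≤ S * ρ₀ x := by
    intro x hx
    have h1 : deriv ρ₀ x / ρ₀ x ≤ S :=
      le_csSup himg.bddAbove (Set.mem_image_of_mem _ hx)
    have := (div_le_iff₀ (hρpos x hx)).mp h1
    linarith
  have hSpos : 0 < S := by
    have h0 : (0:ℝ) ∈ Set.Icc (0:ℝ) 1 := Set.mem_Icc.mpr ⟨le_refl _, by norm_num⟩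
    have : deriv ρ₀ 0 / ρ₀ 0 ≤ S := le_csSup himg.bddAbove (Set.mem_image_of_mem _ h0)
    have := div_pos (hρ'pos 0 h0) (hρpos 0 h0)
    linarith
  -- The flux function W and its derivative W'
  set W : ℝ → ℝ := fun x =>
    (-lam^2) * ((fun y => ρ₀ y * deriv φ y) x * φ x)
    + (lam*μ) * (iteratedDeriv 3 φ x * φ x - iteratedDeriv 2 φ x * deriv φ x)
    + (-(2*lam*μ*k^2)) * (deriv φ x * φ x)
    + (-(σ*k^2)) * ((fun y => (deriv ρ₀ y)^2 * deriv φ y) x * φ x) with hWdef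
  set W' : ℝ → ℝ := fun x =>
    (-lam^2) * (deriv (fun y => ρ₀ y * deriv φ y) x * φ x
      + ρ₀ x * deriv φ x * deriv φ x)
    + (lam*μ) * ((iteratedDeriv 4 φ x * φ x + iteratedDeriv 3 φ x * deriv φ x)
      - (iteratedDeriv 3 φ x * deriv φ x + iteratedDeriv 2 φ x * iteratedDeriv 2 φ x))
    + (-(2*lam*μ*k^2)) * (iteratedDeriv 2 φ x * φ x + deriv φ x * deriv φ x)
    + (-(σ*k^2)) * (deriv (fun y => (deriv ρ₀ y)^2 * deriv φ y) x * φ x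
      + (deriv ρ₀ x)^2 * deriv φ x * deriv φ x) with hW'def
  -- basic HasDerivAt facts
  have h1top : (1 : WithTop ℕ∞) ≤ ((⊤ : ℕ∞) : WithTop ℕ∞) := by exact_mod_cast le_top
  have hder_φ : ∀ x : ℝ, HasDerivAt φ (deriv φ x) x :=
    fun x => (hφ'.differentiable (by simp) x).hasDerivAt
  have hder_φ1 : ∀ x : ℝ, HasDerivAt (deriv φ) (iteratedDeriv 2 φ x) x := by
    intro x
    have h := ((hid 1).differentiable (by simp) x).hasDerivAt
    rw [iteratedDeriv_one] at h
    have e : iteratedDeriv 2 φ x = deriv (deriv φ) x := by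
      rw [show (2:ℕ) = 1 + 1 from rfl, iteratedDeriv_succ, iteratedDeriv_one]
    rw [e]
    exact h
  have hder_φ2 : ∀ x : ℝ, HasDerivAt (iteratedDeriv 2 φ) (iteratedDeriv 3 φ x) x := by
    intro x
    have h := ((hid 2).differentiable (by simp) x).hasDerivAt
    have e : iteratedDeriv 3 φ x = deriv (iteratedDeriv 2 φ) x := by
      rw [show (3:ℕ) = 2 + 1 from rfl, iteratedDeriv_succ]
    rw [e]
    exact h
  have hder_φ3 : ∀ x : ℝ, HasDerivAt (iteratedDeriv 3 φ) (iteratedDeriv 4 φ x) x := by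
    intro x
    have h := ((hid 3).differentiable (by simp) x).hasDerivAt
    have e : iteratedDeriv 4 φ x = deriv (iteratedDeriv 3 φ) x := by
      rw [show (4:ℕ) = 3 + 1 from rfl, iteratedDeriv_succ]
    rw [e]
    exact h
  have hder_p1 : ∀ x : ℝ, HasDerivAt (fun y => ρ₀ y * deriv φ y)
      (deriv (fun y => ρ₀ y * deriv φ y) x) x :=
    fun x => (hp1.differentiable (by simp) x).hasDerivAt
  have hder_p2 : ∀ x : ℝ, HasDerivAt (fun y => (deriv ρ₀ y)^2 * deriv φ y)
      (deriv (fun y => (deriv ρ₀ y)^2 * deriv φ y) x) x :=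
    fun x => (hp2.differentiable (by simp) x).hasDerivAt
  have hWderiv : ∀ x : ℝ, HasDerivAt W (W' x) x := by
    intro x
    have h1 : HasDerivAt (fun y => (fun y => ρ₀ y * deriv φ y) y * φ y)
        (deriv (fun y => ρ₀ y * deriv φ y) x * φ x + ρ₀ x * deriv φ x * deriv φ x) x := by
      have := (hder_p1 x).mul (hder_φ x)
      exact this.congr_deriv (by ring)
    have h2 : HasDerivAt (fun y => iteratedDeriv 3 φ y * φ y - iteratedDeriv 2 φ y * deriv φ y)
        ((iteratedDeriv 4 φ x * φ x + iteratedDeriv 3 φ x * deriv φ x)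
          - (iteratedDeriv 3 φ x * deriv φ x + iteratedDeriv 2 φ x * iteratedDeriv 2 φ x)) x :=
      ((hder_φ3 x).mul (hder_φ x)).sub ((hder_φ2 x).mul (hder_φ1 x))
    have h3 : HasDerivAt (fun y => deriv φ y * φ y)
        (iteratedDeriv 2 φ x * φ x + deriv φ x * deriv φ x) x :=
      (hder_φ1 x).mul (hder_φ x)
    have h4 : HasDerivAt (fun y => (fun y => (deriv ρ₀ y)^2 * deriv φ y) y * φ y)
        (deriv (fun y => (deriv ρ₀ y)^2 * deriv φ y) x * φ x
          + (deriv ρ₀ x)^2 * deriv φ x * deriv φ x) x := by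
      have := (hder_p2 x).mul (hder_φ x)
      exact this.congr_deriv (by ring)
    exact (((h1.const_mul (-lam^2)).add (h2.const_mul (lam*μ))).add
      (h3.const_mul (-(2*lam*μ*k^2)))).add (h4.const_mul (-(σ*k^2)))
  -- continuity of W'
  have hW'cont : Continuous W' := by
    have c0 : Continuous φ := hφ'.continuous
    have c1 : Continuous (deriv φ) := hφd.continuous
    have c2 : Continuous (iteratedDeriv 2 φ) := (hid 2).continuous
    have c3 : Continuous (iteratedDeriv 3 φ) := (hid 3).continuous
    have c4 : Continuous (iteratedDeriv 4 φ) := (hid 4).continuous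
    have cp1 : Continuous (deriv fun y => ρ₀ y * deriv φ y) := hp1.continuous_deriv h1top
    have cp2 : Continuous (deriv fun y => (deriv ρ₀ y)^2 * deriv φ y) :=
      hp2.continuous_deriv h1top
    have cρd : Continuous (deriv ρ₀) := hρd.continuous
    have cρ : Continuous ρ₀ := hρ'.continuous
    rw [hW'def]
    fun_prop
  -- FTC : ∫ W' = W 1 - W 0 = 0
  have hW0 : W 0 = 0 := by simp [hWdef, hbc0, hbc0']
  have hW1 : W 1 = 0 := by simp [hWdef, hbc1, hbc1']
  have hIW' : (∫ x in (0:ℝ)..1, W' x) = 0 := by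
    rw [intervalIntegral.integral_eq_sub_of_hasDerivAt (fun x _ => hWderiv x)
      (hW'cont.intervalIntegrable 0 1), hW0, hW1, sub_zero]
  -- pointwise : (lam^2 - g*S) * k^2 * (ρ₀ x * φ x ^ 2) ≤ - W' x  on [0,1]
  have hpoint : ∀ x ∈ Set.Icc (0:ℝ) 1,
      (lam^2 - g*S) * k^2 * (ρ₀ x * φ x ^ 2) ≤ - W' x := by
    intro x hx
    have hode := hODE x hx
    have heq : - W' x - (lam^2 - g*S) * k^2 * (ρ₀ x * φ x ^ 2)
        = lam*μ*k^4 * φ x ^ 2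
          + g*k^2 * ((S * ρ₀ x - deriv ρ₀ x) * φ x ^ 2)
          + σ*k^4 * ((deriv ρ₀ x)^2 * φ x ^ 2)
          + lam^2 * (ρ₀ x * (deriv φ x)^2)
          + lam*μ * (iteratedDeriv 2 φ x)^2
          + 2*lam*μ*k^2 * (deriv φ x)^2
          + σ*k^2 * ((deriv ρ₀ x)^2 * (deriv φ x)^2) := by
      rw [hW'def]
      linear_combination (-(φ x)) * hode
    have hb := hSle x hx
    have h1 : 0 ≤ lam*μ*k^4 * φ x ^ 2 := by positivity
    have h2 : 0 ≤ g*k^2 * ((S * ρ₀ x - deriv ρ₀ x) * φ x ^ 2) := by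
      apply mul_nonneg (by positivity)
      exact mul_nonneg (by linarith) (sq_nonneg _)
    have h3 : 0 ≤ σ*k^4 * ((deriv ρ₀ x)^2 * φ x ^ 2) := by positivity
    have h4 : 0 ≤ lam^2 * (ρ₀ x * (deriv φ x)^2) := by
      have := (hρpos x hx).le
      positivity
    have h5 : 0 ≤ lam*μ * (iteratedDeriv 2 φ x)^2 := by positivity
    have h6 : 0 ≤ 2*lam*μ*k^2 * (deriv φ x)^2 := by positivity
    have h7 : 0 ≤ σ*k^2 * ((deriv ρ₀ x)^2 * (deriv φ x)^2) := by positivity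
    linarith
  -- integrate the pointwise bound
  have hfcont : Continuous (fun x => (lam^2 - g*S) * k^2 * (ρ₀ x * φ x ^ 2)) := by
    have := hρ'.continuous
    have := hφ'.continuous
    fun_prop
  have hIneg : (∫ x in (0:ℝ)..1, (lam^2 - g*S) * k^2 * (ρ₀ x * φ x ^ 2)) ≤ 0 := by
    have hint1 : IntervalIntegrable (fun x => (lam^2 - g*S) * k^2 * (ρ₀ x * φ x ^ 2)) volume 0 1 :=
      hfcont.intervalIntegrable 0 1
    have hint2 : IntervalIntegrable (fun x => - W' x) volume 0 1 :=
      (hW'cont.neg).intervalIntegrable 0 1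
    have hm := intervalIntegral.integral_mono_on (by norm_num : (0:ℝ) ≤ 1) hint1 hint2 hpoint
    have : (∫ x in (0:ℝ)..1, - W' x) = 0 := by
      rw [intervalIntegral.integral_neg, hIW', neg_zero]
    linarith [hm.trans_eq this]
  -- positivity of A = ∫ ρ₀ φ²
  have hAcont : Continuous (fun x => ρ₀ x * φ x ^ 2) := by
    have := hρ'.continuous
    have := hφ'.continuous
    fun_prop
  have hApos : 0 < ∫ x in (0:ℝ)..1, ρ₀ x * φ x ^ 2 := by
    obtain ⟨x₀, hx₀, hφx₀⟩ := hφne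
    have hx₀mem : x₀ ∈ Set.Ioo (0:ℝ) 1 := by
      rcases Set.mem_Icc.mp hx₀ with ⟨h0, h1⟩
      constructor
      · rcases lt_or_eq_of_le h0 with h | h
        · exact h
        · exact absurd (h ▸ hbc0) hφx₀
      · rcases lt_or_eq_of_le h1 with h | h
        · exact h
        · exact absurd (h.symm ▸ hbc1) hφx₀
    have hfx₀ : 0 < ρ₀ x₀ * φ x₀ ^ 2 :=
      mul_pos (hρpos x₀ hx₀) (by positivity)
    -- find a neighbourhood where the integrand is positive
    have hopen : IsOpen {y : ℝ | 0 < ρ₀ y * φ y ^ 2} := isOpen_lt continuous_const hAcont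
    have hnhds : {y : ℝ | 0 < ρ₀ y * φ y ^ 2} ∈ nhds x₀ := hopen.mem_nhds hfx₀
    obtain ⟨ε, hε, hball⟩ := Metric.mem_nhds_iff.mp hnhds
    set c : ℝ := max 0 (x₀ - ε/2) with hc
    set d : ℝ := min 1 (x₀ + ε/2) with hd
    have hcx : c < x₀ := max_lt hx₀mem.1 (by linarith)
    have hxd : x₀ < d := lt_min hx₀mem.2 (by linarith)
    have hcd : c < d := hcx.trans hxd
    have hc0 : (0:ℝ) ≤ c := le_max_left _ _
    have hd1 : d ≤ 1 := min_le_left _ _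
    have hsub : ∀ y ∈ Set.Ioo c d, 0 < ρ₀ y * φ y ^ 2 := by
      intro y hy
      apply hball
      rw [Metric.mem_ball, Real.dist_eq, abs_lt]
      have h1 : x₀ - ε/2 ≤ c := le_max_right _ _
      have h2 : d ≤ x₀ + ε/2 := min_le_right _ _
      constructor <;> [skip; skip] <;> cases hy with
      | intro hl hr => linarith
    have hmid : 0 < ∫ x in c..d, ρ₀ x * φ x ^ 2 :=
      intervalIntegral_pos_of_pos_on (hAcont.intervalIntegrable c d) hsub hcd
    have hsplit : (∫ x in (0:ℝ)..1, ρ₀ x * φ x ^ 2)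
        = (∫ x in (0:ℝ)..c, ρ₀ x * φ x ^ 2) + (∫ x in c..d, ρ₀ x * φ x ^ 2)
          + (∫ x in d..(1:ℝ), ρ₀ x * φ x ^ 2) := by
      rw [intervalIntegral.integral_add_adjacent_intervals
          (hAcont.intervalIntegrable 0 c) (hAcont.intervalIntegrable c d),
        intervalIntegral.integral_add_adjacent_intervals
          (hAcont.intervalIntegrable 0 d) (hAcont.intervalIntegrable d 1)]
    have hleft : 0 ≤ ∫ x in (0:ℝ)..c, ρ₀ x * φ x ^ 2 := by
      apply intervalIntegral.integral_nonneg hc0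
      intro u hu
      have : u ∈ Set.Icc (0:ℝ) 1 := ⟨hu.1, hu.2.trans (hcd.le.trans hd1)⟩
      exact mul_nonneg (hρpos u this).le (sq_nonneg _)
    have hright : 0 ≤ ∫ x in d..(1:ℝ), ρ₀ x * φ x ^ 2 := by
      apply intervalIntegral.integral_nonneg hd1
      intro u hu
      have : u ∈ Set.Icc (0:ℝ) 1 := ⟨(hc0.trans hcd.le).trans hu.1, hu.2⟩
      exact mul_nonneg (hρpos u this).le (sq_nonneg _)
    rw [hsplit]
    linarith
  -- conclude lam^2 ≤ g * S
  have hIconst : (∫ x in (0:ℝ)..1, (lam^2 - g*S) * k^2 * (ρ₀ x * φ x ^ 2))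
      = (lam^2 - g*S) * k^2 * ∫ x in (0:ℝ)..1, ρ₀ x * φ x ^ 2 := by
    rw [intervalIntegral.integral_const_mul]
  have hfinal : lam^2 ≤ g * S := by
    by_contra hcon
    push_neg at hcon
    have hpos : 0 < (lam^2 - g*S) * k^2 * ∫ x in (0:ℝ)..1, ρ₀ x * φ x ^ 2 := by
      apply mul_pos (mul_pos (by linarith) (by positivity)) hApos
    rw [hIconst] at hIneg
    linarith
  rw [Real.le_sqrt' hlam]
  exact hfinal
end

section
/- Let ρ₀ be smooth on [0,1] with min ρ₀ > 0 and min ρ₀' > 0, g, μ, σ, k > 0, and suppose φ ∈ H²₀((0,1))∩H⁴((0,1)), γ > 0 and λ > 0 satisfy gk²ρ₀'φ + σk²((ρ₀')²φ')' − σk⁴(ρ₀')²φ = γ[λ(k²ρ₀φ − (ρ₀φ')') + μ(φ⁽⁴⁾ − 2k²φ'' + k⁴φ)] with φ ≠ 0 and boundary conditions φ(0)=φ'(0)=φ(1)=φ'(1)=0. Then λ/γ ≥ (λ² min ρ₀ + λμk²)/(g max ρ₀'). -/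
open MeasureTheory intervalIntegral
open scoped ContDiff

/-- integration by parts for smooth functions on `[0,1]`. -/
private lemma my_ibp (u v : ℝ → ℝ) (hu : ContDiff ℝ ∞ u) (hv : ContDiff ℝ ∞ v) :
    ∫ x in (0:ℝ)..1, deriv u x * v x
      = u 1 * v 1 - u 0 * v 0 - ∫ x in (0:ℝ)..1, u x * deriv v x := by
  have h1 : (1 : WithTop ℕ∞) ≤ ∞ := by exact_mod_cast le_top
  have h := intervalIntegral.integral_mul_deriv_eq_deriv_mul
    (u := u) (v := v) (u' := deriv u) (v' := deriv v) (a := (0:ℝ)) (b := 1)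
    (fun x _ => (hu.differentiable (by simp)).differentiableAt.hasDerivAt)
    (fun x _ => (hv.differentiable (by simp)).differentiableAt.hasDerivAt)
    ((hu.continuous_deriv h1).intervalIntegrable 0 1)
    ((hv.continuous_deriv h1).intervalIntegrable 0 1)
  linarith

set_option maxHeartbeats 2000000 in
/-- lower bound λ/γ ≥ (λ² min ρ₀ + λμk²)/(g max ρ₀') for eigenpairs
of Q_{k,σ} φ = γ P_{k,λ} φ. -/
theorem lambda_over_gamma_lower_bound
    (ρ₀ : ℝ → ℝ) (g μ σ k γ lam : ℝ) (φ : ℝ → ℝ)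
    (hρ : ContDiff ℝ (⊤ : ℕ∞) ρ₀)
    (hρpos : ∀ x ∈ Set.Icc (0:ℝ) 1, 0 < ρ₀ x)
    (hρ'pos : ∀ x ∈ Set.Icc (0:ℝ) 1, 0 < deriv ρ₀ x)
    (hg : 0 < g) (hμ : 0 < μ) (hσ : 0 < σ) (hk : 0 < k)
    (hγ : 0 < γ) (hlam : 0 < lam)
    (hφ : ContDiff ℝ (⊤ : ℕ∞) φ)
    (hφne : ∃ x ∈ Set.Icc (0:ℝ) 1, φ x ≠ 0)
    (hbc0 : φ 0 = 0) (hbc0' : deriv φ 0 = 0)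
    (hbc1 : φ 1 = 0) (hbc1' : deriv φ 1 = 0)
    (hEq : ∀ x ∈ Set.Icc (0:ℝ) 1,
      g*k^2 * deriv ρ₀ x * φ x
        + σ*k^2 * deriv (fun y => (deriv ρ₀ y)^2 * deriv φ y) x
        - σ*k^4 * (deriv ρ₀ x)^2 * φ x
      = γ * (lam * (k^2 * ρ₀ x * φ x - deriv (fun y => ρ₀ y * deriv φ y) x)
          + μ * (iteratedDeriv 4 φ x - 2*k^2 * iteratedDeriv 2 φ x + k^4 * φ x))) :
    (lam^2 * sInf (ρ₀ '' Set.Icc (0:ℝ) 1) + lam*μ*k^2)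
      / (g * sSup (deriv ρ₀ '' Set.Icc (0:ℝ) 1)) ≤ lam / γ := by
  have hrhoI : ContDiff ℝ ∞ ρ₀ := hρ.of_le (by simp)
  have hphiI : ContDiff ℝ ∞ φ := hφ.of_le (by simp)
  have hρd : ContDiff ℝ ∞ (deriv ρ₀) := (contDiff_infty_iff_deriv.mp hrhoI).2
  have hφ1 : ContDiff ℝ ∞ (deriv φ) := (contDiff_infty_iff_deriv.mp hphiI).2
  have hφ2 : ContDiff ℝ ∞ (deriv (deriv φ)) := (contDiff_infty_iff_deriv.mp hφ1).2
  have hφ3 : ContDiff ℝ ∞ (deriv (deriv (deriv φ))) := (contDiff_infty_iff_deriv.mp hφ2).2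
  have hu1 : ContDiff ℝ ∞ (fun y => (deriv ρ₀ y)^2 * deriv φ y) := (hρd.pow 2).mul hφ1
  have hu2 : ContDiff ℝ ∞ (fun y => ρ₀ y * deriv φ y) := hrhoI.mul hφ1
  -- continuity facts (for fun_prop / integrability)
  have cρ : Continuous ρ₀ := hrhoI.continuous
  have cφ : Continuous φ := hphiI.continuous
  have cρd : Continuous (deriv ρ₀) := hρd.continuous
  have cφ1 : Continuous (deriv φ) := hφ1.continuous
  have cφ2 : Continuous (deriv (deriv φ)) := hφ2.continuous
  have cφ4 : Continuous (deriv (deriv (deriv (deriv φ)))) :=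
    ((contDiff_infty_iff_deriv.mp hφ3).2).continuous
  have cDu1 : Continuous (deriv (fun y => (deriv ρ₀ y)^2 * deriv φ y)) :=
    ((contDiff_infty_iff_deriv.mp hu1).2).continuous
  have cDu2 : Continuous (deriv (fun y => ρ₀ y * deriv φ y)) :=
    ((contDiff_infty_iff_deriv.mp hu2).2).continuous
  -- rewrite iterated derivatives
  have e2 : iteratedDeriv 2 φ = deriv (deriv φ) := by
    rw [show (2:ℕ) = 1+1 from rfl, iteratedDeriv_succ, iteratedDeriv_one]
  have e4 : iteratedDeriv 4 φ = deriv (deriv (deriv (deriv φ))) := by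
    rw [show (4:ℕ) = 3+1 from rfl, iteratedDeriv_succ,
      show (3:ℕ) = 2+1 from rfl, iteratedDeriv_succ, e2]
  rw [e2, e4] at hEq
  -- integrals
  set A := ∫ x in (0:ℝ)..1, deriv ρ₀ x * φ x * φ x with hA
  set B := ∫ x in (0:ℝ)..1, ρ₀ x * φ x * φ x with hB
  set C := ∫ x in (0:ℝ)..1, φ x * φ x with hC
  set D := ∫ x in (0:ℝ)..1, ρ₀ x * deriv φ x * deriv φ x with hD
  set E := ∫ x in (0:ℝ)..1, (deriv ρ₀ x)^2 * deriv φ x * deriv φ x with hE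
  set F := ∫ x in (0:ℝ)..1, (deriv ρ₀ x)^2 * φ x * φ x with hF
  set G := ∫ x in (0:ℝ)..1, deriv (deriv φ) x * deriv (deriv φ) x with hG
  set Hh := ∫ x in (0:ℝ)..1, deriv φ x * deriv φ x with hHh
  -- integration by parts identities
  have ibp1 : ∫ x in (0:ℝ)..1, deriv (fun y => (deriv ρ₀ y)^2 * deriv φ y) x * φ x = -E := by
    rw [my_ibp _ _ hu1 hphiI, hbc0, hbc1]
    rw [hE, show (∫ x in (0:ℝ)..1, (fun y => (deriv ρ₀ y)^2 * deriv φ y) x * deriv φ x)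
        = ∫ x in (0:ℝ)..1, (deriv ρ₀ x)^2 * deriv φ x * deriv φ x from
      intervalIntegral.integral_congr (fun x _ => by ring)]
    ring
  have ibp2 : ∫ x in (0:ℝ)..1, deriv (fun y => ρ₀ y * deriv φ y) x * φ x = -D := by
    rw [my_ibp _ _ hu2 hphiI, hbc0, hbc1]
    rw [hD, show (∫ x in (0:ℝ)..1, (fun y => ρ₀ y * deriv φ y) x * deriv φ x)
        = ∫ x in (0:ℝ)..1, ρ₀ x * deriv φ x * deriv φ x from
      intervalIntegral.integral_congr (fun x _ => by ring)]
    ring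
  have ibp3 : ∫ x in (0:ℝ)..1, deriv (deriv (deriv (deriv φ))) x * φ x = G := by
    rw [my_ibp _ _ hφ3 hphiI, hbc0, hbc1,
      my_ibp _ _ hφ2 hφ1, hbc0', hbc1', hG]
    ring
  have ibp4 : ∫ x in (0:ℝ)..1, deriv (deriv φ) x * φ x = -Hh := by
    rw [my_ibp _ _ hφ1 hphiI, hbc0, hbc1, hHh]
    ring
  -- integrate the eigenvalue equation against φ
  have hIcc : Set.uIcc (0:ℝ) 1 = Set.Icc 0 1 := Set.uIcc_of_le (by norm_num)
  have hkey : ∫ x in (0:ℝ)..1,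
      (g*k^2 * deriv ρ₀ x * φ x
        + σ*k^2 * deriv (fun y => (deriv ρ₀ y)^2 * deriv φ y) x
        - σ*k^4 * (deriv ρ₀ x)^2 * φ x) * φ x
      = ∫ x in (0:ℝ)..1,
      (γ * (lam * (k^2 * ρ₀ x * φ x - deriv (fun y => ρ₀ y * deriv φ y) x)
          + μ * (deriv (deriv (deriv (deriv φ))) x - 2*k^2 * deriv (deriv φ) x + k^4 * φ x))) * φ x := by
    apply intervalIntegral.integral_congr
    intro x hx
    rw [hIcc] at hx
    exact congrArg (· * φ x) (hEq x hx)
  have hLHS : ∫ x in (0:ℝ)..1,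
      (g*k^2 * deriv ρ₀ x * φ x
        + σ*k^2 * deriv (fun y => (deriv ρ₀ y)^2 * deriv φ y) x
        - σ*k^4 * (deriv ρ₀ x)^2 * φ x) * φ x
      = g*k^2*A + σ*k^2*(-E) - σ*k^4*F := by
    rw [show (∫ x in (0:ℝ)..1,
      (g*k^2 * deriv ρ₀ x * φ x
        + σ*k^2 * deriv (fun y => (deriv ρ₀ y)^2 * deriv φ y) x
        - σ*k^4 * (deriv ρ₀ x)^2 * φ x) * φ x)
      = ∫ x in (0:ℝ)..1,
        (g*k^2 * (deriv ρ₀ x * φ x * φ x)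
          + σ*k^2 * (deriv (fun y => (deriv ρ₀ y)^2 * deriv φ y) x * φ x)
          - σ*k^4 * ((deriv ρ₀ x)^2 * φ x * φ x)) from
      intervalIntegral.integral_congr (fun x _ => by ring)]
    rw [intervalIntegral.integral_sub, intervalIntegral.integral_add,
      intervalIntegral.integral_const_mul, intervalIntegral.integral_const_mul,
      intervalIntegral.integral_const_mul, ibp1]
    · apply Continuous.intervalIntegrable; fun_prop
    · apply Continuous.intervalIntegrable; fun_prop
    · apply Continuous.intervalIntegrable; fun_prop
    · apply Continuous.intervalIntegrable; fun_prop
  have hRHS : ∫ x in (0:ℝ)..1,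
      (γ * (lam * (k^2 * ρ₀ x * φ x - deriv (fun y => ρ₀ y * deriv φ y) x)
          + μ * (deriv (deriv (deriv (deriv φ))) x - 2*k^2 * deriv (deriv φ) x + k^4 * φ x))) * φ x
      = γ*lam*k^2*B - γ*lam*(-D) + γ*μ*G - 2*γ*μ*k^2*(-Hh) + γ*μ*k^4*C := by
    rw [show (∫ x in (0:ℝ)..1,
      (γ * (lam * (k^2 * ρ₀ x * φ x - deriv (fun y => ρ₀ y * deriv φ y) x)
          + μ * (deriv (deriv (deriv (deriv φ))) x - 2*k^2 * deriv (deriv φ) x + k^4 * φ x))) * φ x)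
      = ∫ x in (0:ℝ)..1,
        (γ*lam*k^2 * (ρ₀ x * φ x * φ x)
          - γ*lam * (deriv (fun y => ρ₀ y * deriv φ y) x * φ x)
          + γ*μ * (deriv (deriv (deriv (deriv φ))) x * φ x)
          - 2*γ*μ*k^2 * (deriv (deriv φ) x * φ x)
          + γ*μ*k^4 * (φ x * φ x)) from
      intervalIntegral.integral_congr (fun x _ => by ring)]
    rw [intervalIntegral.integral_add, intervalIntegral.integral_sub,
      intervalIntegral.integral_add, intervalIntegral.integral_sub,
      intervalIntegral.integral_const_mul, intervalIntegral.integral_const_mul,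
      intervalIntegral.integral_const_mul, intervalIntegral.integral_const_mul,
      intervalIntegral.integral_const_mul, ibp2, ibp3, ibp4]
    · apply Continuous.intervalIntegrable; fun_prop
    · apply Continuous.intervalIntegrable; fun_prop
    · apply Continuous.intervalIntegrable; fun_prop
    · apply Continuous.intervalIntegrable; fun_prop
    · apply Continuous.intervalIntegrable; fun_prop
    · apply Continuous.intervalIntegrable; fun_prop
    · apply Continuous.intervalIntegrable; fun_prop
    · apply Continuous.intervalIntegrable; fun_prop
  have main : g*k^2*A - σ*k^2*E - σ*k^4*F
      = γ*lam*k^2*B + γ*lam*D + γ*μ*G + 2*γ*μ*k^2*Hh + γ*μ*k^4*C := by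
    rw [hLHS, hRHS] at hkey; linarith
  -- nonnegativity of the square integrals
  have hEnn : 0 ≤ E := intervalIntegral.integral_nonneg (by norm_num)
    (fun x _ => by nlinarith [mul_self_nonneg (deriv φ x), sq_nonneg (deriv ρ₀ x), mul_self_nonneg (deriv ρ₀ x * deriv φ x)])
  have hFnn : 0 ≤ F := intervalIntegral.integral_nonneg (by norm_num)
    (fun x _ => by nlinarith [mul_self_nonneg (deriv ρ₀ x * φ x)])
  have hGnn : 0 ≤ G := intervalIntegral.integral_nonneg (by norm_num)
    (fun x _ => mul_self_nonneg _)
  have hHnn : 0 ≤ Hh := intervalIntegral.integral_nonneg (by norm_num)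
    (fun x _ => mul_self_nonneg _)
  have hDnn : 0 ≤ D := intervalIntegral.integral_nonneg (by norm_num)
    (fun x hx => by nlinarith [mul_self_nonneg (deriv φ x), (hρpos x hx).le])
  -- min / max bounds
  set m := sInf (ρ₀ '' Set.Icc (0:ℝ) 1) with hm
  set M := sSup (deriv ρ₀ '' Set.Icc (0:ℝ) 1) with hM
  have hMge : ∀ x ∈ Set.Icc (0:ℝ) 1, deriv ρ₀ x ≤ M := fun x hx =>
    le_csSup ((isCompact_Icc.image cρd).bddAbove) ⟨x, hx, rfl⟩
  have hmle : ∀ x ∈ Set.Icc (0:ℝ) 1, m ≤ ρ₀ x := fun x hx =>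
    csInf_le ((isCompact_Icc.image cρ).bddBelow) ⟨x, hx, rfl⟩
  have h01 : (0:ℝ) ∈ Set.Icc (0:ℝ) 1 := by norm_num
  have hMpos : 0 < M := lt_of_lt_of_le (hρ'pos 0 h01) (hMge 0 h01)
  -- C > 0
  have hCpos : 0 < C := by
    obtain ⟨x₀, hx₀, hx₀ne⟩ := hφne
    refine intervalIntegral.integral_pos (by norm_num) ?_ (fun x _ => mul_self_nonneg _) ?_
    · exact (cφ.mul cφ).continuousOn
    · exact ⟨x₀, hx₀, mul_self_pos.mpr hx₀ne⟩
  -- A ≤ M*C and m*C ≤ B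
  have hAle : A ≤ M*C := by
    have : A ≤ ∫ x in (0:ℝ)..1, M * (φ x * φ x) := by
      apply intervalIntegral.integral_mono_on (by norm_num)
      · apply Continuous.intervalIntegrable; fun_prop
      · apply Continuous.intervalIntegrable; fun_prop
      · intro x hx
        nlinarith [mul_self_nonneg (φ x), hMge x hx]
    rwa [intervalIntegral.integral_const_mul] at this
  have hBge : m*C ≤ B := by
    have : (∫ x in (0:ℝ)..1, m * (φ x * φ x)) ≤ B := by
      apply intervalIntegral.integral_mono_on (by norm_num)
      · apply Continuous.intervalIntegrable; fun_prop
      · apply Continuous.intervalIntegrable; fun_prop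
      · intro x hx
        nlinarith [mul_self_nonneg (φ x), hmle x hx]
    rwa [intervalIntegral.integral_const_mul] at this
  -- conclude
  have hfinal : γ*(lam*m + μ*k^2) ≤ g*M := by
    have hk2 : (0:ℝ) < k^2 := by positivity
    have h1 : g*k^2*A ≥ γ*lam*k^2*(m*C) + γ*μ*k^4*C := by
      nlinarith [mul_nonneg (mul_pos hσ hk2).le hEnn,
        mul_nonneg (mul_pos hσ (by positivity : (0:ℝ) < k^4)).le hFnn,
        mul_nonneg (mul_pos hγ hlam).le hDnn,
        mul_nonneg (mul_pos hγ hμ).le hGnn,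
        mul_nonneg (by positivity : (0:ℝ) ≤ 2*γ*μ*k^2) hHnn,
        mul_le_mul_of_nonneg_left hBge (by positivity : (0:ℝ) ≤ γ*lam*k^2)]
    have h2 : g*k^2*(M*C) ≥ γ*lam*k^2*(m*C) + γ*μ*k^4*C := by
      nlinarith [mul_le_mul_of_nonneg_left hAle (by positivity : (0:ℝ) ≤ g*k^2)]
    have h3 : 0 ≤ (g*M - γ*lam*m - γ*μ*k^2) * (k^2*C) := by nlinarith
    have h4 : 0 < k^2*C := mul_pos hk2 hCpos
    nlinarith [h3, h4]
  rw [div_le_div_iff₀ (by positivity) hγ]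
  nlinarith [mul_le_mul_of_nonneg_left hfinal hlam.le]
end
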